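/- arXiv:1709.01043 — 14 statements merged into one kernel-verified Lean document; each statement's English description precedes it below -/
import Mathlib

section
/- Let L be a complete lattice whose underlying lattice is distributive. Then Fil(L), the collection of filters on L ordered by inclusion, is a coherent frame: it is a complete lattice (with infimum given by intersection) satisfying the frame law F ⊓ (⨆_i G_i) = ⨆_i (F ⊓ G_i) for every filter F and family of filters (G_i); its greatest element is a compact element; every filter is the supremum of the compact elements below it; the compact elements are closed under finite meets; and the compact elements of Fil(L) are exactly the principal filters ↑x for x ∈ L. -/
/-- A filter on a complete lattice `L`: a subset containing `⊤`, upward closed,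
and closed under binary meets. -/
structure LatFil (L : Type*) [CompleteLattice L] : Type _ where
  carrier : Set L
  top_mem : ⊤ ∈ carrier
  mem_of_le : ∀ ⦃x y : L⦄, x ∈ carrier → x ≤ y → y ∈ carrier
  inf_mem : ∀ ⦃x y : L⦄, x ∈ carrier → y ∈ carrier → x ⊓ y ∈ carrier

namespace LatFil

variable {L : Type*} [CompleteLattice L]

instance : SetLike (LatFil L) L where
  coe := carrier
  coe_injective := by
    rintro ⟨_, _, _, _⟩ ⟨_, _, _, _⟩ h
    congr

instance : PartialOrder (LatFil L) := .ofSetLike (LatFil L) L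

/-- The infimum of a set of filters is their intersection. -/
instance : InfSet (LatFil L) where
  sInf S :=
    { carrier := {x | ∀ F ∈ S, x ∈ F.carrier}
      top_mem := fun F _ => F.top_mem
      mem_of_le := fun x y hx hxy F hF => F.mem_of_le (hx F hF) hxy
      inf_mem := fun x y hx hy F hF => F.inf_mem (hx F hF) (hy F hF) }

/-- Filters on `L`, ordered by inclusion, form a complete lattice with infimum
given by intersection. -/
instance : CompleteLattice (LatFil L) :=
  completeLatticeOfInf (LatFil L) (fun S =>
    ⟨fun F hF x hx => hx F hF, fun G hG x hx F hF => hG hF hx⟩)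

/-- The principal filter at `x`. -/
def principal (x : L) : LatFil L where
  carrier := {u | x ≤ u}
  top_mem := le_top
  mem_of_le := fun _ _ h h' => h.trans h'
  inf_mem := fun _ _ h h' => le_inf h h'

end LatFil

universe u v

/-- Compact element of a complete lattice, as `CompleteLattice.IsCompactElement` was defined
in Mathlib of December 2024 (the name is gone from current Mathlib). -/
def CompleteLattice.IsCompactElement {α : Type*} [CompleteLattice α] (k : α) :=
  ∀ s : Set α, k ≤ sSup s → ∃ t : Finset α, ↑t ⊆ s ∧ k ≤ t.sup id

section Aux

namespace LatFil

variable {L : Type*} [CompleteLattice L]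

theorem mem_carrier_iff {F : LatFil L} {x : L} : x ∈ F.carrier ↔ x ∈ F := Iff.rfl

theorem le_def' {F G : LatFil L} : F ≤ G ↔ ∀ ⦃x : L⦄, x ∈ F → x ∈ G :=
  SetLike.le_def

theorem mem_principal' {x u : L} : u ∈ principal x ↔ x ≤ u := Iff.rfl

theorem principal_le_iff {x : L} {F : LatFil L} : principal x ≤ F ↔ x ∈ F := by
  constructor
  · intro h
    exact h (le_refl x)
  · intro hx u hu
    exact F.mem_of_le hx hu

theorem principal_le_principal {x y : L} (h : x ≤ y) :
    principal y ≤ principal x := fun u hu => h.trans hu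

theorem finsetInf_mem {F : LatFil L} {T : Finset L} (h : ∀ t ∈ T, t ∈ F) :
    T.inf id ∈ F := by
  classical
  induction T using Finset.induction_on with
  | empty => simpa using (show ⊤ ∈ F from F.top_mem)
  | insert _ _ ht ih =>
    rw [Finset.inf_insert]
    exact F.inf_mem (h _ (Finset.mem_insert_self _ _))
      (ih fun t' ht' => h t' (Finset.mem_insert_of_mem ht'))

theorem mem_inf {F G : LatFil L} {x : L} : x ∈ F ⊓ G ↔ x ∈ F ∧ x ∈ G := by
  constructor
  · intro h
    exact ⟨(inf_le_left : F ⊓ G ≤ F) h, (inf_le_right : F ⊓ G ≤ G) h⟩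
  · rintro ⟨hF, hG⟩
    have : principal x ≤ F ⊓ G :=
      le_inf (principal_le_iff.2 hF) (principal_le_iff.2 hG)
    exact this (le_refl x)

/-- The join of a set of filters, described explicitly. -/
def joinFil (S : Set (LatFil L)) : LatFil L where
  carrier := {x | ∃ T : Finset L, (∀ t ∈ T, ∃ F ∈ S, t ∈ F) ∧ T.inf id ≤ x}
  top_mem := ⟨∅, by simp⟩
  mem_of_le := by
    rintro x y ⟨T, hT, hle⟩ hxy
    exact ⟨T, hT, hle.trans hxy⟩
  inf_mem := by
    classical
    rintro x y ⟨T₁, hT₁, hle₁⟩ ⟨T₂, hT₂, hle₂⟩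
    refine ⟨T₁ ∪ T₂, ?_, ?_⟩
    · intro t ht
      rcases Finset.mem_union.1 ht with h | h
      · exact hT₁ t h
      · exact hT₂ t h
    · rw [Finset.inf_union]
      exact inf_le_inf hle₁ hle₂

theorem isLUB_joinFil (S : Set (LatFil L)) : IsLUB S (joinFil S) := by
  constructor
  · intro F hF x hx
    refine ⟨{x}, fun t ht => ⟨F, hF, ?_⟩, by simpa using le_refl x⟩
    rw [Finset.mem_singleton] at ht
    exact ht ▸ hx
  · rintro K hK x ⟨T, hT, hle⟩
    have : T.inf id ∈ K := by
      refine finsetInf_mem fun t ht => ?_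
      obtain ⟨F, hF, htF⟩ := hT t ht
      exact hK hF htF
    exact K.mem_of_le this hle

theorem sSup_eq_joinFil (S : Set (LatFil L)) : sSup S = joinFil S :=
  (isLUB_sSup S).unique (isLUB_joinFil S)

theorem mem_sSup {S : Set (LatFil L)} {x : L} :
    x ∈ sSup S ↔ ∃ T : Finset L, (∀ t ∈ T, ∃ F ∈ S, t ∈ F) ∧ T.inf id ≤ x := by
  rw [sSup_eq_joinFil]; exact Iff.rfl

theorem isCompactElement_principal (x : L) :
    CompleteLattice.IsCompactElement (principal x) := by
  classical
  intro S hle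
  have hx : x ∈ sSup S := hle (le_refl x)
  obtain ⟨T, hT, hinf⟩ := mem_sSup.1 hx
  choose f hfS hfmem using hT
  refine ⟨T.attach.image fun t => f t.1 t.2, ?_, ?_⟩
  · intro F hF
    simp only [Finset.coe_image, Set.mem_image] at hF
    obtain ⟨t, _, rfl⟩ := hF
    exact hfS _ _
  · rw [Finset.sup_id_eq_sSup]
    refine principal_le_iff.2 (mem_sSup.2 ⟨T, fun t ht => ?_, hinf⟩)
    exact ⟨f t ht, Finset.mem_coe.2 (Finset.mem_image.2 ⟨⟨t, ht⟩, Finset.mem_attach _ _, rfl⟩),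
      hfmem t ht⟩

theorem top_eq_principal_bot : (⊤ : LatFil L) = principal (⊥ : L) :=
  le_antisymm (fun u _ => bot_le) le_top

theorem isCompactElement_iff_principal (F : LatFil L) :
    CompleteLattice.IsCompactElement F ↔ ∃ x : L, F = principal x := by
  constructor
  · intro hF
    rw [CompleteLattice.IsCompactElement,
      ← CompleteLattice.isCompactElement_iff_exists_le_sSup_of_le_sSup,
      CompleteLattice.isCompactElement_iff_le_of_directed_sSup_le] at hF
    have hne : (principal '' F.carrier).Nonempty := ⟨principal ⊤, ⟨⊤, F.top_mem, rfl⟩⟩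
    have hdir : DirectedOn (· ≤ ·) (principal '' F.carrier) := by
      rintro _ ⟨a, ha, rfl⟩ _ ⟨b, hb, rfl⟩
      exact ⟨principal (a ⊓ b), ⟨a ⊓ b, F.inf_mem ha hb, rfl⟩,
        principal_le_principal inf_le_left, principal_le_principal inf_le_right⟩
    have hFle : F ≤ sSup (principal '' F.carrier) := by
      intro y hy
      have hmem : principal y ∈ principal '' F.carrier := ⟨y, hy, rfl⟩
      exact le_sSup hmem (le_refl y)
    obtain ⟨G, ⟨x, hx, rfl⟩, hle⟩ := hF _ hne hdir hFle
    exact ⟨x, le_antisymm hle (principal_le_iff.2 hx)⟩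
  · rintro ⟨x, rfl⟩
    exact isCompactElement_principal x

theorem principal_inf_principal (x y : L) :
    principal x ⊓ principal y = principal (x ⊔ y) := by
  refine le_antisymm ?_ ?_
  · intro u hu
    rcases mem_inf.1 hu with ⟨h₁, h₂⟩
    exact sup_le h₁ h₂
  · exact le_inf (principal_le_principal le_sup_left)
      (principal_le_principal le_sup_right)

theorem sup_inf_of_dist {L : Type*} [CompleteLattice L]
    (hdist : ∀ x y z : L, x ⊓ (y ⊔ z) = (x ⊓ y) ⊔ (x ⊓ z)) (a b c : L) :
    a ⊔ b ⊓ c = (a ⊔ b) ⊓ (a ⊔ c) := by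
  have h1 : (a ⊔ b) ⊓ (a ⊔ c) = ((a ⊔ b) ⊓ a) ⊔ ((a ⊔ b) ⊓ c) := hdist _ _ _
  have h2 : (a ⊔ b) ⊓ a = a := inf_eq_right.2 le_sup_left
  have h3 : (a ⊔ b) ⊓ c = (c ⊓ a) ⊔ (c ⊓ b) := by
    rw [inf_comm]; exact hdist _ _ _
  rw [h1, h2, h3, ← sup_assoc, sup_eq_left.2 (inf_le_right : c ⊓ a ≤ a), inf_comm]

theorem sup_finsetInf {L : Type*} [CompleteLattice L]
    (hdist : ∀ x y z : L, x ⊓ (y ⊔ z) = (x ⊓ y) ⊔ (x ⊓ z)) (x : L) (T : Finset L) :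
    T.inf (fun t => x ⊔ t) = x ⊔ T.inf id := by
  classical
  induction T using Finset.induction_on with
  | empty => simp
  | insert _ _ ht ih =>
    rw [Finset.inf_insert, Finset.inf_insert, ih, id,
      ← sup_inf_of_dist hdist]

end LatFil

end Aux

/-- If `L` is a complete lattice whose underlying lattice is distributive, then
the complete lattice `Fil L` of filters on `L` (ordered by inclusion, with
infima given by intersections) is a coherent frame: it satisfies the frame law,
its top element is compact, it is compactly generated, its compact elements are
closed under finite meets, and the compact elements are exactly the principal
filters. -/
theorem latFil_coherent_frame (L : Type u) [CompleteLattice L]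
    (hdist : ∀ x y z : L, x ⊓ (y ⊔ z) = (x ⊓ y) ⊔ (x ⊓ z)) :
    (∀ S : Set (LatFil L), (sInf S).carrier = ⋂ F ∈ S, F.carrier) ∧
    (∀ (F : LatFil L) (ι : Type v) (G : ι → LatFil L),
        F ⊓ (⨆ i, G i) = ⨆ i, F ⊓ G i) ∧
    CompleteLattice.IsCompactElement (⊤ : LatFil L) ∧
    (∀ F : LatFil L,
        F = sSup {G : LatFil L | CompleteLattice.IsCompactElement G ∧ G ≤ F}) ∧
    (∀ F G : LatFil L, CompleteLattice.IsCompactElement F →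
        CompleteLattice.IsCompactElement G →
        CompleteLattice.IsCompactElement (F ⊓ G)) ∧
    (∀ F : LatFil L,
        CompleteLattice.IsCompactElement F ↔ ∃ x : L, F = LatFil.principal x) := by
  classical
  refine ⟨?_, ?_, ?_, ?_, ?_, fun F => LatFil.isCompactElement_iff_principal F⟩
  · -- sInf is intersection
    intro S
    ext x
    simp only [Set.mem_iInter]
    exact Iff.rfl
  · -- frame law
    intro F ι G
    refine le_antisymm ?_ (iSup_le fun i => inf_le_inf le_rfl (le_iSup _ i))
    intro x hx
    rcases LatFil.mem_inf.1 hx with ⟨hxF, hxS⟩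
    obtain ⟨T, hT, hinf⟩ := LatFil.mem_sSup.1 hxS
    refine LatFil.mem_sSup.2 ⟨T.image (fun t => x ⊔ t), ?_, ?_⟩
    · intro u hu
      obtain ⟨t, ht, rfl⟩ := Finset.mem_image.1 hu
      obtain ⟨H, ⟨i, rfl⟩, htH⟩ := hT t ht
      refine ⟨F ⊓ G i, ⟨i, rfl⟩, LatFil.mem_inf.2 ⟨?_, ?_⟩⟩
      · exact F.mem_of_le hxF le_sup_left
      · exact (G i).mem_of_le htH le_sup_right
    · have : (T.image fun t => x ⊔ t).inf id = T.inf fun t => x ⊔ t := by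
        rw [Finset.inf_image]; rfl
      rw [this, LatFil.sup_finsetInf hdist]
      exact sup_le le_rfl hinf
  · -- top is compact
    rw [LatFil.top_eq_principal_bot]
    exact LatFil.isCompactElement_principal ⊥
  · -- compactly generated
    intro F
    refine le_antisymm ?_ (sSup_le fun G hG => hG.2)
    intro y hy
    have h1 : LatFil.principal y ∈
        {G : LatFil L | CompleteLattice.IsCompactElement G ∧ G ≤ F} :=
      ⟨LatFil.isCompactElement_principal y, LatFil.principal_le_iff.2 hy⟩
    exact (le_sSup h1 : LatFil.principal y ≤ _) (le_refl y)
  · -- compacts closed under meets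
    intro F G hF hG
    obtain ⟨x, rfl⟩ := (LatFil.isCompactElement_iff_principal F).1 hF
    obtain ⟨y, rfl⟩ := (LatFil.isCompactElement_iff_principal G).1 hG
    rw [LatFil.principal_inf_principal]
    exact LatFil.isCompactElement_principal _
end

section
/- Let L and M be complete lattices and img : L → M, inv : M → L monotone maps forming a Galois connection img ⊣ inv, and suppose in addition that img preserves finite meets (img ⊤ = ⊤ and img (x ⊓ x') = img x ⊓ img x'). Then imgfil : Fil(L) → Fil(M) preserves arbitrary suprema of filters, and it has a right adjoint given explicitly by B ↦ {x ∈ L : img x ∈ B}: for every filter A on L and filter B on M, imgfil(A) ⊆ B if and only if A ⊆ {x ∈ L : img x ∈ B} (and {x ∈ L : img x ∈ B} is a filter on L). -/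
/-- The property of being a filter, for a subset of a complete lattice. -/
def IsLatFilter {L : Type*} [CompleteLattice L] (S : Set L) : Prop :=
  ⊤ ∈ S ∧ (∀ x y : L, x ∈ S → x ≤ y → y ∈ S) ∧ ∀ x y : L, x ∈ S → y ∈ S → x ⊓ y ∈ S

namespace LatFil

variable {L : Type*} [CompleteLattice L]

variable {M : Type*} [CompleteLattice M]

/-- The forward filter of `A` along a Galois connection `img ⊣ inv`:
`imgfil A = {y : inv y ∈ A}`. -/
def imgfil {img : L → M} {inv : M → L} (gc : GaloisConnection img inv)
    (A : LatFil L) : LatFil M where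
  carrier := {y | inv y ∈ A.carrier}
  top_mem := by
    show inv ⊤ ∈ A.carrier
    rw [gc.u_top]
    exact A.top_mem
  mem_of_le := fun x y hx hxy => A.mem_of_le hx (gc.monotone_u hxy)
  inf_mem := fun x y hx hy => by
    show inv (x ⊓ y) ∈ A.carrier
    rw [gc.u_inf]
    exact A.inf_mem hx hy

end LatFil

/-- If `img ⊣ inv` is a Galois connection between complete lattices and `img`
preserves finite meets, then `imgfil` preserves arbitrary suprema of filters and
has a right adjoint given by `B ↦ {x : img x ∈ B}` (which is itself a filter). -/
theorem imgfil_preserves_sSup_and_has_right_adjoint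
    {L M : Type*} [CompleteLattice L] [CompleteLattice M]
    {img : L → M} {inv : M → L} (gc : GaloisConnection img inv)
    (htop : img ⊤ = ⊤) (hinf : ∀ x x' : L, img (x ⊓ x') = img x ⊓ img x') :
    (∀ S : Set (LatFil L),
        LatFil.imgfil gc (sSup S) = sSup (LatFil.imgfil gc '' S)) ∧
    (∀ B : LatFil M, IsLatFilter {x : L | img x ∈ B.carrier}) ∧
    (∀ (A : LatFil L) (B : LatFil M),
        LatFil.imgfil gc A ≤ B ↔ A.carrier ⊆ {x : L | img x ∈ B.carrier}) := by
  have hfil : ∀ B : LatFil M, IsLatFilter {x : L | img x ∈ B.carrier} := fun B =>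
    ⟨by simpa [htop] using B.top_mem,
     fun x y hx hxy => B.mem_of_le hx (gc.monotone_l hxy),
     fun x y hx hy => by
       show img (x ⊓ y) ∈ B.carrier
       rw [hinf]; exact B.inf_mem hx hy⟩
  have hadj : ∀ (A : LatFil L) (B : LatFil M),
      LatFil.imgfil gc A ≤ B ↔ A.carrier ⊆ {x : L | img x ∈ B.carrier} := by
    intro A B
    constructor
    · intro h x hx
      exact h (show inv (img x) ∈ A.carrier from A.mem_of_le hx (gc.le_u_l x))
    · intro h y hy
      exact B.mem_of_le (h hy) (gc.l_u_le y)
  refine ⟨?_, hfil, hadj⟩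
  let r : LatFil M → LatFil L := fun B =>
    { carrier := {x : L | img x ∈ B.carrier}
      top_mem := (hfil B).1
      mem_of_le := fun x y hx hxy => (hfil B).2.1 x y hx hxy
      inf_mem := fun x y hx hy => (hfil B).2.2 x y hx hy }
  have gc' : GaloisConnection (LatFil.imgfil gc) r := fun A B => hadj A B
  intro S
  rw [gc'.l_sSup, sSup_image]
end

section
/- Let L and M be complete lattices and g : M → L a monotone map preserving finite meets (g ⊤ = ⊤ and g(b ⊓ b') = g b ⊓ g b'). For a filter B on M let invfil_g(B) = {x ∈ L : there exists b ∈ B with g b ≤ x}, a filter on L. Then the following are equivalent: (i) g has a right adjoint M ← L (i.e., there is a monotone map r : L → M with g b ≤ x ⟺ b ≤ r x); (ii) g preserves arbitrary suprema; (iii) invfil_g preserves arbitrary infima of filters, i.e., invfil_g(⋂_{i∈I} B_i) = ⋂_{i∈I} invfil_g(B_i) for every family (B_i) of filters on M, including the empty family (for which both sides are all of L, respectively all of the corresponding lattice); (iv) invfil_g : Fil(M) → Fil(L) has a left adjoint with respect to inclusion. -/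
namespace LatFil

variable {L : Type*} [CompleteLattice L]

variable {M : Type*} [CompleteLattice M]

/-- The inverse filter of `B` along a monotone map `g : M → L`:
`invfil B = {x : ∃ b ∈ B, g b ≤ x}`. -/
def invfil {g : M → L} (hg : Monotone g) (B : LatFil M) : LatFil L where
  carrier := {x | ∃ b ∈ B.carrier, g b ≤ x}
  top_mem := ⟨⊤, B.top_mem, le_top⟩
  mem_of_le := fun x y hx hxy => hx.imp fun b hb => ⟨hb.1, hb.2.trans hxy⟩
  inf_mem := fun x y hx hy => by
    obtain ⟨b, hb, hbx⟩ := hx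
    obtain ⟨b', hb', hby⟩ := hy
    exact ⟨b ⊓ b', B.inf_mem hb hb',
      le_inf ((hg inf_le_left).trans hbx) ((hg inf_le_right).trans hby)⟩

end LatFil

/-- For a monotone, finite-meet-preserving map `g : M → L` between complete
lattices, the following are equivalent: (i) `g` has a right adjoint;
(ii) `g` preserves arbitrary suprema; (iii) `invfil g` preserves arbitrary
infima (= intersections) of filters, including the empty family;
(iv) `invfil g : Fil(M) → Fil(L)` has a left adjoint. -/
theorem invfil_preserves_sInf_tfae {L M : Type*} [CompleteLattice L]
    [CompleteLattice M] {g : M → L} (hg : Monotone g)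
    (htop : g ⊤ = ⊤) (hinf : ∀ b b' : M, g (b ⊓ b') = g b ⊓ g b') :
    [(∃ r : L → M, ∀ (b : M) (x : L), g b ≤ x ↔ b ≤ r x),
     (∀ S : Set M, g (sSup S) = sSup (g '' S)),
     (∀ S : Set (LatFil M),
        LatFil.invfil hg (sInf S) = sInf (LatFil.invfil hg '' S)),
     (∃ l : LatFil L → LatFil M, GaloisConnection l (LatFil.invfil hg))].TFAE := by
  have hmono : Monotone (LatFil.invfil hg) := fun B B' hBB x hx =>
    hx.imp fun b hb => ⟨hBB hb.1, hb.2⟩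
  tfae_have 1 → 2 := by
    rintro ⟨r, hr⟩ S
    refine le_antisymm ((hr _ _).mpr (sSup_le fun b hb =>
      (hr b _).mp (le_sSup (Set.mem_image_of_mem g hb)))) ?_
    exact sSup_le (Set.forall_mem_image.mpr fun b hb => hg (le_sSup hb))
  tfae_have 2 → 1 := by
    intro h2
    refine ⟨fun x => sSup {b | g b ≤ x}, fun b x => ⟨fun h => le_sSup h, fun h => ?_⟩⟩
    calc g b ≤ g (sSup {b | g b ≤ x}) := hg h
      _ = sSup (g '' {b | g b ≤ x}) := h2 _
      _ ≤ x := sSup_le (Set.forall_mem_image.mpr fun b hb => hb)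
  tfae_have 1 → 3 := by
    rintro ⟨r, hr⟩ S
    apply le_antisymm
    · refine le_sInf fun G hG => ?_
      obtain ⟨B, hB, rfl⟩ := hG
      exact fun x hx => hx.imp fun b hb => ⟨hb.1 B hB, hb.2⟩
    · intro x hx
      refine ⟨r x, fun B hB => ?_, (hr _ _).mpr le_rfl⟩
      obtain ⟨b, hb, hbx⟩ := hx (LatFil.invfil hg B) ⟨B, hB, rfl⟩
      exact B.mem_of_le hb ((hr b x).mp hbx)
  tfae_have 3 → 1 := by
    intro h3
    refine ⟨fun x => sSup {b | g b ≤ x}, fun b x => ⟨fun h => le_sSup h, fun h => ?_⟩⟩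
    set P : M → LatFil M := fun m =>
      ⟨{y | m ≤ y}, le_top, fun a c ha hac => ha.trans hac,
        fun a c ha hc => le_inf ha hc⟩ with hP
    have hx : x ∈ LatFil.invfil hg (sInf (P '' {b | g b ≤ x})) := by
      rw [h3]
      intro G hG
      obtain ⟨Q, ⟨b, hb, rfl⟩, rfl⟩ := hG
      exact ⟨b, le_rfl, hb⟩
    obtain ⟨m, hm, hmx⟩ := hx
    have hsm : sSup {b | g b ≤ x} ≤ m := sSup_le fun b hb => hm (P b) ⟨b, hb, rfl⟩
    exact ((hg h).trans (hg hsm)).trans hmx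
  tfae_have 3 → 4 := by
    intro h3
    refine ⟨fun A => sInf {B | A ≤ LatFil.invfil hg B},
      fun A B => ⟨fun h => ?_, fun h => sInf_le h⟩⟩
    calc A ≤ LatFil.invfil hg (sInf {B | A ≤ LatFil.invfil hg B}) := by
          rw [h3]
          refine le_sInf fun G hG => ?_
          obtain ⟨B', hB', rfl⟩ := hG
          exact hB'
      _ ≤ LatFil.invfil hg B := hmono h
  tfae_have 4 → 3 := by
    rintro ⟨l, hl⟩ S
    rw [hl.u_sInf, sInf_image]
  tfae_finish
end

section
/- A preneighbourhood μ on a complete lattice L is a weak neighbourhood if and only if it is interpolative, i.e., for every m ∈ L, μ(m) = {p ∈ L : there exists q ∈ μ(m) with p ∈ μ(q)}. -/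
/-- A preneighbourhood on a complete lattice `L`: an antitone assignment of a
filter `nbhd m` on `L` to each `m : L`, every member of which majorises `m`. -/
structure PreNbhd (L : Type*) [CompleteLattice L] where
  nbhd : L → Set L
  top_mem : ∀ m : L, ⊤ ∈ nbhd m
  up_closed : ∀ (m : L) ⦃p q : L⦄, p ∈ nbhd m → p ≤ q → q ∈ nbhd m
  inf_mem' : ∀ (m : L) ⦃p q : L⦄, p ∈ nbhd m → q ∈ nbhd m → p ⊓ q ∈ nbhd m
  antitone : ∀ ⦃m n : L⦄, m ≤ n → nbhd n ⊆ nbhd m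
  le_of_mem : ∀ ⦃m p : L⦄, p ∈ nbhd m → m ≤ p

namespace PreNbhd

variable {L : Type*} [CompleteLattice L]

theorem ext' {μ ν : PreNbhd L} (h : μ.nbhd = ν.nbhd) : μ = ν := by
  cases μ; cases ν; cases h; rfl

/-- The pointwise order on preneighbourhoods. -/
instance : PartialOrder (PreNbhd L) where
  le μ ν := ∀ m, μ.nbhd m ⊆ ν.nbhd m
  le_refl μ m := subset_rfl
  le_trans μ ν ρ h h' m := (h m).trans (h' m)
  le_antisymm μ ν h h' := ext' (funext fun m => subset_antisymm (h m) (h' m))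

/-- A weak neighbourhood. -/
def IsWeak (μ : PreNbhd L) : Prop :=
  ∀ m : L, μ.nbhd m ⊆ ⋃ p ∈ μ.nbhd m, ⋂ x ≤ p, μ.nbhd x

/-- A neighbourhood: a weak neighbourhood turning arbitrary suprema into
intersections of filters. -/
def IsNbhd (μ : PreNbhd L) : Prop :=
  μ.IsWeak ∧ ∀ G : Set L, μ.nbhd (sSup G) = ⋂ x ∈ G, μ.nbhd x

/-- The `μ`-open elements. -/
def opens (μ : PreNbhd L) : Set L := {p | p ∈ μ.nbhd p}

/-- The `μ`-interior. -/
def intr (μ : PreNbhd L) (m : L) : L := sSup {p | p ∈ μ.opens ∧ p ≤ m}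

end PreNbhd

/-- A preneighbourhood `μ` on a complete lattice is a weak neighbourhood if and
only if it is interpolative. -/
theorem isWeak_iff_interpolative {L : Type*} [CompleteLattice L] (μ : PreNbhd L) :
    μ.IsWeak ↔ ∀ m : L, μ.nbhd m = {p : L | ∃ q ∈ μ.nbhd m, p ∈ μ.nbhd q} := by
  constructor
  · intro hw m
    apply Set.eq_of_subset_of_subset
    · intro p hp
      obtain ⟨_, ⟨q, rfl⟩, _, ⟨hq, rfl⟩, hpin⟩ := hw m hp
      exact ⟨q, hq, Set.mem_iInter₂.mp hpin q le_rfl⟩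
    · rintro p ⟨q, hq, hp⟩
      exact μ.antitone (μ.le_of_mem hq) hp
  · intro hi m p hp
    rw [hi m] at hp
    obtain ⟨q, hq, hpq⟩ := hp
    refine Set.mem_biUnion hq (Set.mem_iInter₂.mpr fun x hx => ?_)
    exact μ.antitone hx hpq
end

section
/- Let μ be a preneighbourhood on a complete lattice L. The set O_μ of μ-open elements is closed under arbitrary suprema (including the empty supremum, so that ⊥ ∈ O_μ) if and only if for every m ∈ L the μ-interior int_μ(m) is μ-open. -/
/-- For a preneighbourhood `μ` on a complete lattice, the set of `μ`-open
elements is closed under arbitrary suprema (including the empty one) if and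
only if every `μ`-interior is `μ`-open. -/
theorem opens_sSup_closed_iff_intr_open {L : Type*} [CompleteLattice L]
    (μ : PreNbhd L) :
    (∀ S : Set L, S ⊆ μ.opens → sSup S ∈ μ.opens) ↔
      ∀ m : L, μ.intr m ∈ μ.opens := by
  constructor
  · intro h m
    exact h _ (fun p hp => hp.1)
  · intro h S hS
    have : sSup S = μ.intr (sSup S) := by
      apply le_antisymm
      · exact sSup_le fun s hs => le_sSup ⟨hS hs, le_sSup hs⟩
      · exact sSup_le fun p hp => hp.2
    rw [this]
    exact h _
end

section
/- Let μ be a preneighbourhood on a complete lattice L such that the μ-interior int_μ(m) is μ-open for every m ∈ L. Then int_μ is a Kuratowski interior operation on L: int_μ(⊤) = ⊤, int_μ(m) ≤ m, int_μ(int_μ(m)) = int_μ(m), and int_μ(m ⊓ n) = int_μ(m) ⊓ int_μ(n) for all m, n ∈ L. -/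
/-- A Kuratowski interior operation on a complete lattice. -/
def IsKurInt {L : Type*} [CompleteLattice L] (i : L → L) : Prop :=
  i ⊤ = ⊤ ∧ (∀ m, i m ≤ m) ∧ (∀ m, i (i m) = i m) ∧ ∀ m n, i (m ⊓ n) = i m ⊓ i n

/-- If every `μ`-interior is `μ`-open then the interior operation of `μ` is a
Kuratowski interior operation. -/
theorem intr_isKurInt {L : Type*} [CompleteLattice L]
    (μ : PreNbhd L) (h : ∀ m : L, μ.intr m ∈ μ.opens) :
    IsKurInt μ.intr := by
  have hle : ∀ m, μ.intr m ≤ m := fun m => sSup_le fun p hp => hp.2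
  have hmono : ∀ {m n : L}, m ≤ n → μ.intr m ≤ μ.intr n := fun {m n} hmn =>
    sSup_le fun p hp => le_sSup ⟨hp.1, hp.2.trans hmn⟩
  have hopen_le : ∀ {p m : L}, p ∈ μ.opens → p ≤ m → p ≤ μ.intr m :=
    fun hp hpm => le_sSup ⟨hp, hpm⟩
  refine ⟨le_antisymm (hle ⊤) (hopen_le (μ.top_mem ⊤) le_rfl), hle, ?_, ?_⟩
  · intro m
    exact le_antisymm (hle _) (hopen_le (h m) le_rfl)
  · intro m n
    refine le_antisymm (le_inf (hmono inf_le_left) (hmono inf_le_right)) ?_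
    have hopen : μ.intr m ⊓ μ.intr n ∈ μ.opens := by
      have h1 : μ.intr m ∈ μ.nbhd (μ.intr m ⊓ μ.intr n) := μ.antitone inf_le_left (h m)
      have h2 : μ.intr n ∈ μ.nbhd (μ.intr m ⊓ μ.intr n) := μ.antitone inf_le_right (h n)
      exact μ.inf_mem' _ h1 h2
    exact hopen_le hopen (inf_le_inf (hle m) (hle n))
end

section
/- Let μ be a neighbourhood on a complete lattice L. Then for every m ∈ L the μ-interior int_μ(m) is μ-open, and μ is generated by its open elements: μ(m) = {p ∈ L : there exists q ∈ O_μ with m ≤ q ≤ p} for every m ∈ L. -/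
/-- For a neighbourhood `μ` on a complete lattice, every `μ`-interior is
`μ`-open, and `μ` is generated by its open elements. -/
theorem nbhd_intr_open_and_generated {L : Type*} [CompleteLattice L]
    (μ : PreNbhd L) (h : μ.IsNbhd) :
    (∀ m : L, μ.intr m ∈ μ.opens) ∧
      ∀ m : L, μ.nbhd m = {p : L | ∃ q ∈ μ.opens, m ≤ q ∧ q ≤ p} := by
  obtain ⟨hw, hs⟩ := h
  have open_sSup : ∀ G ⊆ μ.opens, sSup G ∈ μ.opens := by
    intro G hG
    show sSup G ∈ μ.nbhd (sSup G)
    rw [hs]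
    exact Set.mem_iInter₂.2 fun x hx => μ.up_closed x (hG hx) (le_sSup hx)
  constructor
  · intro m
    exact open_sSup _ (fun p hp => hp.1)
  · intro m
    ext p
    constructor
    · intro hp
      have hqS : p ∈ μ.nbhd (sSup {x | p ∈ μ.nbhd x}) := by
        rw [hs]; exact Set.mem_iInter₂.2 fun x hx => hx
      refine ⟨sSup {x | p ∈ μ.nbhd x}, ?_, le_sSup hp, μ.le_of_mem hqS⟩
      have h' := hw _ hqS
      simp only [Set.mem_iUnion, Set.mem_iInter] at h'
      obtain ⟨p'', hp'', hx⟩ := h'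
      have h1 : p'' ≤ sSup {x | p ∈ μ.nbhd x} := le_sSup (hx p'' le_rfl)
      have h2 : sSup {x | p ∈ μ.nbhd x} ≤ p'' := μ.le_of_mem hp''
      have heq : p'' = sSup {x | p ∈ μ.nbhd x} := le_antisymm h1 h2
      exact heq ▸ hp''
    · rintro ⟨q, hq, hmq, hqp⟩
      exact μ.up_closed m (μ.antitone hmq hq) hqp
end

section
/- Let i be a Kuratowski interior operation on a complete lattice L and define 𝔭_i(m) = {p ∈ L : m ≤ i(p)} for m ∈ L. Then 𝔭_i is a neighbourhood on L; its open elements are exactly the fixed points of i, i.e., O_{𝔭_i} = {p ∈ L : i(p) = p}; its interior operation satisfies int_{𝔭_i}(m) = i(m) for all m; and for every preneighbourhood μ on L all of whose interiors are μ-open, if i(m) ≤ int_μ(m) for all m then 𝔭_i(m) ⊆ μ(m) for all m. -/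
/-- For a Kuratowski interior operation `i`, the assignment
`𝔭_i(m) = {p : m ≤ i p}` is a neighbourhood whose open elements are exactly the
fixed points of `i` and whose interior operation is `i`; moreover `𝔭_i` is below
every preneighbourhood `μ` with all interiors open such that `i ≤ int_μ`. -/
theorem kurInt_neighbourhood {L : Type*} [CompleteLattice L]
    (i : L → L) (hi : IsKurInt i) :
    ∃ P : PreNbhd L,
      (∀ m : L, P.nbhd m = {p : L | m ≤ i p}) ∧
      P.IsNbhd ∧
      P.opens = {p : L | i p = p} ∧
      (∀ m : L, P.intr m = i m) ∧
      ∀ μ : PreNbhd L, (∀ m : L, μ.intr m ∈ μ.opens) →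
        (∀ m : L, i m ≤ μ.intr m) → ∀ m : L, P.nbhd m ⊆ μ.nbhd m := by
  obtain ⟨htop, hle, hidem, hinf⟩ := hi
  have hmono : ∀ {a b : L}, a ≤ b → i a ≤ i b := by
    intro a b hab
    have : i (a ⊓ b) = i a ⊓ i b := hinf a b
    rw [inf_eq_left.mpr hab] at this
    exact this ▸ inf_le_right
  refine ⟨⟨fun m => {p | m ≤ i p},
    fun m => by simp [htop],
    fun m p q hp hpq => hp.trans (hmono hpq),
    fun m p q hp hq => by simpa [hinf] using le_inf hp hq,
    fun m n hmn p hp => hmn.trans hp,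
    fun m p hp => hp.trans (hle p)⟩, fun m => rfl, ⟨?_, ?_⟩, ?_, ?_, ?_⟩
  · intro m p hp
    refine Set.mem_iUnion.mpr ⟨i p, Set.mem_iUnion.mpr ⟨?_, ?_⟩⟩
    · simpa [hidem] using hp
    · exact Set.mem_iInter.mpr fun x => Set.mem_iInter.mpr fun hx => hx
  · intro G
    ext p
    simp [sSup_le_iff]
  · ext p
    simp only [PreNbhd.opens, Set.mem_setOf_eq]
    exact ⟨fun h => le_antisymm (hle p) h, fun h => h.ge⟩
  · intro m
    apply le_antisymm
    · refine sSup_le fun p hp => ?_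
      have : i p ≤ i m := hmono hp.2
      have hfix : p ≤ i p := hp.1
      exact hfix.trans this
    · exact le_sSup ⟨(hidem m).ge, hle m⟩
  · intro μ hopen hint m p hp
    have h1 : μ.intr p ∈ μ.nbhd (μ.intr p) := hopen p
    have h2 : m ≤ μ.intr p := hp.trans (hint p)
    have h3 : μ.intr p ≤ p := sSup_le fun q hq => hq.2
    exact μ.up_closed m (μ.antitone h2 h1) h3
end

section
/- Let μ be a preneighbourhood on a complete lattice L such that every μ-interior is μ-open. Then μ is a neighbourhood if and only if μ = 𝔭_{int_μ}, where 𝔭_j(m) = {p ∈ L : m ≤ j(p)}. Consequently, for every Kuratowski interior operation i on L, 𝔭_i is the unique neighbourhood on L whose interior operation equals i; that is, the fibre of the interior assignment μ ↦ int_μ over i (within preneighbourhoods with all interiors open) contains exactly one neighbourhood, namely 𝔭_i, and 𝔭_i is the least element of that fibre. -/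
section Aux

variable {L : Type*} [CompleteLattice L]

lemma intr_le_aux (μ : PreNbhd L) (m : L) : μ.intr m ≤ m :=
  sSup_le fun _ hp => hp.2

lemma le_intr_aux (μ : PreNbhd L) {o m : L} (ho : o ∈ μ.opens) (h : o ≤ m) :
    o ≤ μ.intr m := le_sSup ⟨ho, h⟩

/-- If all interiors are open, `m ≤ intr p` implies `p ∈ nbhd m`. -/
lemma mem_nbhd_of_le_intr (μ : PreNbhd L) (hop : ∀ m : L, μ.intr m ∈ μ.opens)
    {m p : L} (h : m ≤ μ.intr p) : p ∈ μ.nbhd m :=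
  μ.up_closed m (μ.antitone h (hop p)) (intr_le_aux μ p)

/-- If `μ` is a neighbourhood, `p ∈ nbhd m` implies `m ≤ intr p`. -/
lemma le_intr_of_mem_nbhd (μ : PreNbhd L) (hμ : μ.IsNbhd) {m p : L}
    (h : p ∈ μ.nbhd m) : m ≤ μ.intr p := by
  set G : Set L := {x | p ∈ μ.nbhd x} with hG
  set t : L := sSup G with ht
  have hpt : p ∈ μ.nbhd t := by
    rw [ht, hμ.2 G]
    exact Set.mem_iInter₂.mpr fun x hx => hx
  have hmt : m ≤ t := le_sSup h
  have htp : t ≤ p := sSup_le fun x hx => μ.le_of_mem hx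
  obtain ⟨q, hq, hq'⟩ := Set.mem_iUnion₂.mp (hμ.1 t hpt)
  have hq'' : ∀ x ≤ q, p ∈ μ.nbhd x := fun x hx => Set.mem_iInter₂.mp hq' x hx
  have htq : t ≤ q := μ.le_of_mem hq
  have hqt : q ≤ t := le_sSup (hq'' q le_rfl)
  have heq : q = t := le_antisymm hqt htq
  have htopen : t ∈ μ.opens := heq ▸ hq
  exact hmt.trans (le_intr_aux μ htopen htp)

end Aux

/-- A preneighbourhood `μ` with all interiors open is a neighbourhood if and
only if `μ = 𝔭_{int_μ}`.  Consequently, for every Kuratowski interior operation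
`i` there is a preneighbourhood `P = 𝔭_i` which is the unique neighbourhood
whose interior operation is `i`, and `P` is the least element of the fibre of
the interior assignment over `i` (within preneighbourhoods with all interiors
open). -/
theorem nbhd_iff_eq_p_intr_and_unique_fibre {L : Type*} [CompleteLattice L] :
    (∀ μ : PreNbhd L, (∀ m : L, μ.intr m ∈ μ.opens) →
      (μ.IsNbhd ↔ ∀ m : L, μ.nbhd m = {p : L | m ≤ μ.intr p})) ∧
    ∀ i : L → L, IsKurInt i →
      ∃ P : PreNbhd L,
        (∀ m : L, P.nbhd m = {p : L | m ≤ i p}) ∧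
        P.IsNbhd ∧
        (∀ m : L, P.intr m = i m) ∧
        (∀ Q : PreNbhd L, Q.IsNbhd → (∀ m : L, Q.intr m = i m) → Q = P) ∧
        (∀ μ : PreNbhd L, (∀ m : L, μ.intr m ∈ μ.opens) →
          (∀ m : L, μ.intr m = i m) → P ≤ μ) := by
  -- Part 1
  have part1 : ∀ μ : PreNbhd L, (∀ m : L, μ.intr m ∈ μ.opens) →
      (μ.IsNbhd ↔ ∀ m : L, μ.nbhd m = {p : L | m ≤ μ.intr p}) := by
    intro μ hop
    constructor
    · intro hμ m
      ext p
      exact ⟨fun h => le_intr_of_mem_nbhd μ hμ h,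
        fun h => mem_nbhd_of_le_intr μ hop h⟩
    · intro hμ
      constructor
      · intro m p hp
        rw [hμ m] at hp
        have hiopen : μ.intr p ∈ μ.nbhd m := by
          rw [hμ m]
          exact hp.trans (le_intr_aux μ (hop p) le_rfl)
        refine Set.mem_iUnion₂.mpr ⟨μ.intr p, hiopen, Set.mem_iInter₂.mpr ?_⟩
        intro x hx
        rw [hμ x]
        exact hx
      · intro G
        ext p
        simp only [hμ, Set.mem_iInter₂, Set.mem_setOf_eq, sSup_le_iff]
  refine ⟨part1, ?_⟩
  intro i hi
  obtain ⟨hi_top, hi_le, hi_idem, hi_inf⟩ := hi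
  have hi_mono : ∀ ⦃a b : L⦄, a ≤ b → i a ≤ i b := by
    intro a b hab
    have : a ⊓ b = a := inf_eq_left.mpr hab
    calc i a = i (a ⊓ b) := by rw [this]
    _ = i a ⊓ i b := hi_inf a b
    _ ≤ i b := inf_le_right
  refine ⟨⟨fun m => {p : L | m ≤ i p}, ?_, ?_, ?_, ?_, ?_⟩, ?_⟩
  · intro m; simp [hi_top]
  · intro m p q hp hpq; exact hp.trans (hi_mono hpq)
  · intro m p q hp hq
    simpa [hi_inf] using le_inf hp hq
  · intro m n hmn p hp; exact hmn.trans hp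
  · intro m p hp; exact hp.trans (hi_le p)
  set P : PreNbhd L := ⟨fun m => {p : L | m ≤ i p}, _, _, _, _, _⟩ with hP
  have hPnbhd : ∀ m : L, P.nbhd m = {p : L | m ≤ i p} := fun m => rfl
  have hPopens : ∀ p : L, p ∈ P.opens ↔ p ≤ i p := fun p => Iff.rfl
  have hPintr : ∀ m : L, P.intr m = i m := by
    intro m
    apply le_antisymm
    · apply sSup_le
      rintro p ⟨hpo, hpm⟩
      exact le_trans ((hPopens p).mp hpo) (hi_mono hpm)
    · exact le_sSup ⟨(hPopens (i m)).mpr (le_of_eq (hi_idem m).symm), hi_le m⟩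
  have hPop : ∀ m : L, P.intr m ∈ P.opens := by
    intro m
    rw [hPopens, hPintr]
    exact le_of_eq (hi_idem m).symm
  have hPIsNbhd : P.IsNbhd := by
    rw [part1 P hPop]
    intro m; ext p; simp [hPnbhd, hPintr]
  refine ⟨fun m => rfl, hPIsNbhd, hPintr, ?_, ?_⟩
  · -- uniqueness
    intro Q hQ hQi
    -- Q's interiors are open since Q is a neighbourhood
    have hQop : ∀ m : L, Q.intr m ∈ Q.opens := by
      intro m
      have : Q.nbhd (Q.intr m) = ⋂ x ∈ {p | p ∈ Q.opens ∧ p ≤ m}, Q.nbhd x :=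
        hQ.2 _
      show Q.intr m ∈ Q.nbhd (Q.intr m)
      rw [this]
      refine Set.mem_iInter₂.mpr ?_
      rintro x ⟨hxo, hxm⟩
      exact Q.up_closed x hxo (le_sSup ⟨hxo, hxm⟩)
    apply PreNbhd.ext'
    funext m
    rw [(part1 Q hQop).mp hQ m, hPnbhd m]
    simp [hQi]
  · -- least element
    intro μ hop hμi m p hp
    have : m ≤ μ.intr p := by rw [hμi p]; exact hp
    exact mem_nbhd_of_le_intr μ hop this
end

section
/- Let L be a complete lattice. The assignment O ↦ μ_O, where μ_O(m) = {p ∈ L : there exists q ∈ O with m ≤ q ≤ p}, defines an order isomorphism from the poset pfs(L) of pseudo-frame sets of L (ordered by inclusion) onto the poset nhd(L) of neighbourhoods on L (ordered pointwise): each μ_O is a neighbourhood, the map is a bijection with inverse μ ↦ O_μ, and O ⊆ O' if and only if μ_O ≤ μ_{O'}. In particular nhd(L) is a complete lattice. -/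
/-- A pseudo-frame set: a subset of a complete lattice closed under finite
meets (in particular containing `⊤`) and arbitrary suprema (in particular
containing `⊥`). -/
def IsPFS {L : Type*} [CompleteLattice L] (O : Set L) : Prop :=
  ⊤ ∈ O ∧ (∀ p q : L, p ∈ O → q ∈ O → p ⊓ q ∈ O) ∧ ∀ S ⊆ O, sSup S ∈ O

section Aux

namespace PreNbhd

variable {L : Type*} [CompleteLattice L]

/-- The preneighbourhood generated by a pseudo-frame set. -/
def ofPFS (O : Set L) (hO : IsPFS O) : PreNbhd L where
  nbhd m := {p | ∃ q ∈ O, m ≤ q ∧ q ≤ p}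
  top_mem m := ⟨⊤, hO.1, le_top, le_rfl⟩
  up_closed m p q := fun ⟨r, hr, h1, h2⟩ hpq => ⟨r, hr, h1, h2.trans hpq⟩
  inf_mem' m p q := fun ⟨r, hr, h1, h2⟩ ⟨s, hs, h3, h4⟩ =>
    ⟨r ⊓ s, hO.2.1 r s hr hs, le_inf h1 h3, inf_le_inf h2 h4⟩
  antitone m n hmn p := fun ⟨r, hr, h1, h2⟩ => ⟨r, hr, hmn.trans h1, h2⟩
  le_of_mem m p := fun ⟨r, _, h1, h2⟩ => h1.trans h2

theorem ofPFS_nbhd (O : Set L) (hO : IsPFS O) (m : L) :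
    (ofPFS O hO).nbhd m = {p : L | ∃ q ∈ O, m ≤ q ∧ q ≤ p} := rfl

theorem ofPFS_isNbhd (O : Set L) (hO : IsPFS O) : (ofPFS O hO).IsNbhd := by
  constructor
  · intro m p hp
    obtain ⟨q, hq, h1, h2⟩ := hp
    refine Set.mem_iUnion₂.2 ⟨q, ⟨q, hq, h1, le_rfl⟩, ?_⟩
    refine Set.mem_iInter₂.2 fun x hx => ⟨q, hq, hx, h2⟩
  · intro G
    ext p
    simp only [Set.mem_iInter]
    constructor
    · rintro ⟨q, hq, h1, h2⟩ x hx
      exact ⟨q, hq, (le_sSup hx).trans h1, h2⟩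
    · intro hp
      refine ⟨sSup {q | q ∈ O ∧ q ≤ p}, hO.2.2 _ (fun q hq => hq.1), ?_, ?_⟩
      · refine sSup_le fun x hx => ?_
        obtain ⟨q, hq, h1, h2⟩ := hp x hx
        exact h1.trans (le_sSup ⟨hq, h2⟩)
      · exact sSup_le fun q hq => hq.2

theorem ofPFS_opens (O : Set L) (hO : IsPFS O) : (ofPFS O hO).opens = O := by
  ext p
  constructor
  · rintro ⟨q, hq, h1, h2⟩
    rwa [le_antisymm h1 h2]
  · intro hp
    exact ⟨p, hp, le_rfl, le_rfl⟩

theorem opens_isPFS (μ : PreNbhd L) (h : μ.IsNbhd) : IsPFS μ.opens := by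
  refine ⟨μ.top_mem ⊤, fun p q hp hq => ?_, fun S hS => ?_⟩
  · exact μ.inf_mem' _ (μ.antitone inf_le_left hp) (μ.antitone inf_le_right hq)
  · show sSup S ∈ μ.nbhd (sSup S)
    rw [h.2 S]
    exact Set.mem_iInter₂.2 fun x hx => μ.up_closed _ (hS hx) (le_sSup hx)

theorem nbhd_eq (μ : PreNbhd L) (h : μ.IsNbhd) (m : L) :
    μ.nbhd m = {p : L | ∃ q ∈ μ.opens, m ≤ q ∧ q ≤ p} := by
  ext p
  constructor
  · intro hp
    obtain ⟨p₁, hp₁, hW₁⟩ := Set.mem_iUnion₂.1 (h.1 m hp)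
    have hW1 : ∀ x ≤ p₁, p ∈ μ.nbhd x := fun x hx => Set.mem_iInter₂.1 hW₁ x hx
    set W : Set L := {x | ∀ y ≤ x, p ∈ μ.nbhd y} with hWdef
    have hpsW : p ∈ μ.nbhd (sSup W) := by
      rw [h.2 W]
      exact Set.mem_iInter₂.2 fun x hx => hx x le_rfl
    obtain ⟨p₂, hp₂, hW₂⟩ := Set.mem_iUnion₂.1 (h.1 (sSup W) hpsW)
    have hp₂W : p₂ ∈ W := fun y hy => Set.mem_iInter₂.1 hW₂ y hy
    have h1 : p₂ ≤ sSup W := le_sSup hp₂W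
    have h2 : sSup W ≤ p₂ := μ.le_of_mem hp₂
    have hse : p₂ = sSup W := le_antisymm h1 h2
    refine ⟨sSup W, ?_, ?_, ?_⟩
    · show sSup W ∈ μ.nbhd (sSup W)
      rwa [hse] at hp₂
    · exact (μ.le_of_mem hp₁).trans (le_sSup hW1)
    · exact sSup_le fun x hx => μ.le_of_mem (hx x le_rfl)
  · rintro ⟨q, hq, h1, h2⟩
    exact μ.up_closed m (μ.antitone h1 hq) h2

theorem le_iff_opens_subset {O O' : Set L} (hO : IsPFS O) (hO' : IsPFS O') :
    O ⊆ O' ↔ ∀ m : L,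
      {p : L | ∃ q ∈ O, m ≤ q ∧ q ≤ p} ⊆ {p : L | ∃ q ∈ O', m ≤ q ∧ q ≤ p} := by
  constructor
  · rintro h m p ⟨q, hq, h1, h2⟩
    exact ⟨q, h hq, h1, h2⟩
  · intro h q hq
    obtain ⟨r, hr, h1, h2⟩ := h q ⟨q, hq, le_rfl, le_rfl⟩
    rwa [le_antisymm h1 h2]

theorem isPFS_sInter {C : Set (Set L)} (h : ∀ O ∈ C, IsPFS O) : IsPFS (⋂₀ C) := by
  refine ⟨fun O hO => (h O hO).1, fun p q hp hq O hO => (h O hO).2.1 p q (hp O hO) (hq O hO),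
    fun S hS O hO => (h O hO).2.2 S fun s hs => hS hs O hO⟩

theorem opens_mono {μ ν : PreNbhd L} (h : μ ≤ ν) : μ.opens ⊆ ν.opens :=
  fun p hp => h p hp

end PreNbhd

end Aux

/-- The assignment `O ↦ μ_O`, with `μ_O(m) = {p : ∃ q ∈ O, m ≤ q ≤ p}`, is an
order isomorphism from the poset of pseudo-frame sets of `L` onto the poset of
neighbourhoods on `L`, with inverse `μ ↦ O_μ`; in particular the neighbourhoods
on `L` form a complete lattice. -/
theorem pfs_orderIso_nhd {L : Type*} [CompleteLattice L] :
    (∀ O : Set L, IsPFS O → ∃ μO : PreNbhd L,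
      (∀ m : L, μO.nbhd m = {p : L | ∃ q ∈ O, m ≤ q ∧ q ≤ p}) ∧
      μO.IsNbhd ∧ μO.opens = O) ∧
    (∀ μ : PreNbhd L, μ.IsNbhd → IsPFS μ.opens ∧
      ∀ m : L, μ.nbhd m = {p : L | ∃ q ∈ μ.opens, m ≤ q ∧ q ≤ p}) ∧
    (∀ O O' : Set L, IsPFS O → IsPFS O' →
      (O ⊆ O' ↔ ∀ m : L,
        {p : L | ∃ q ∈ O, m ≤ q ∧ q ≤ p} ⊆ {p : L | ∃ q ∈ O', m ≤ q ∧ q ≤ p})) ∧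
    ∀ T : Set (PreNbhd L), (∀ τ ∈ T, PreNbhd.IsNbhd τ) →
      (∃ σ : PreNbhd L, σ.IsNbhd ∧ (∀ τ ∈ T, τ ≤ σ) ∧
        ∀ ρ : PreNbhd L, ρ.IsNbhd → (∀ τ ∈ T, τ ≤ ρ) → σ ≤ ρ) ∧
      (∃ γ : PreNbhd L, γ.IsNbhd ∧ (∀ τ ∈ T, γ ≤ τ) ∧
        ∀ ρ : PreNbhd L, ρ.IsNbhd → (∀ τ ∈ T, ρ ≤ τ) → ρ ≤ γ) := by
  refine ⟨fun O hO => ⟨PreNbhd.ofPFS O hO, PreNbhd.ofPFS_nbhd O hO,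
      PreNbhd.ofPFS_isNbhd O hO, PreNbhd.ofPFS_opens O hO⟩,
    fun μ hμ => ⟨PreNbhd.opens_isPFS μ hμ, PreNbhd.nbhd_eq μ hμ⟩,
    fun O O' hO hO' => PreNbhd.le_iff_opens_subset hO hO', fun T hT => ?_⟩
  constructor
  · set U : Set L := ⋃ τ ∈ T, PreNbhd.opens τ with hU
    set C : Set (Set L) := {O | IsPFS O ∧ U ⊆ O} with hCdef
    have hC : IsPFS (⋂₀ C) := PreNbhd.isPFS_sInter (fun O hO => hO.1)
    refine ⟨PreNbhd.ofPFS _ hC, PreNbhd.ofPFS_isNbhd _ hC, ?_, ?_⟩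
    · intro τ hτ m
      rw [PreNbhd.nbhd_eq τ (hT τ hτ) m]
      have hsub : τ.opens ⊆ ⋂₀ C := fun p hp O hO => hO.2 (Set.mem_iUnion₂.2 ⟨τ, hτ, hp⟩)
      exact (PreNbhd.le_iff_opens_subset (PreNbhd.opens_isPFS τ (hT τ hτ)) hC).1 hsub m
    · intro ρ hρ hle m
      rw [PreNbhd.nbhd_eq ρ hρ m]
      have hsub : ⋂₀ C ⊆ ρ.opens := Set.sInter_subset_of_mem
        ⟨PreNbhd.opens_isPFS ρ hρ, Set.iUnion₂_subset fun τ hτ => PreNbhd.opens_mono (hle τ hτ)⟩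
      exact (PreNbhd.le_iff_opens_subset hC (PreNbhd.opens_isPFS ρ hρ)).1 hsub m
  · have hI : IsPFS (⋂₀ (PreNbhd.opens '' T)) := PreNbhd.isPFS_sInter (by
      rintro O ⟨τ, hτ, rfl⟩; exact PreNbhd.opens_isPFS τ (hT τ hτ))
    refine ⟨PreNbhd.ofPFS _ hI, PreNbhd.ofPFS_isNbhd _ hI, ?_, ?_⟩
    · intro τ hτ m
      rw [PreNbhd.nbhd_eq τ (hT τ hτ) m]
      exact (PreNbhd.le_iff_opens_subset hI (PreNbhd.opens_isPFS τ (hT τ hτ))).1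
        (Set.sInter_subset_of_mem ⟨τ, hτ, rfl⟩) m
    · intro ρ hρ hle m
      rw [PreNbhd.nbhd_eq ρ hρ m]
      have hsub : ρ.opens ⊆ ⋂₀ (PreNbhd.opens '' T) := by
        rintro p hp O ⟨τ, hτ, rfl⟩; exact PreNbhd.opens_mono (hle τ hτ) hp
      exact (PreNbhd.le_iff_opens_subset (PreNbhd.opens_isPFS ρ hρ) hI).1 hsub m
end

section
/- Let L be a complete lattice. The set itop(L) of internal topologies on L is a complete sublattice of the complete lattice nhd(L) of neighbourhoods on L (i.e., itop(L) is closed under the suprema and infima of arbitrary subsets computed in nhd(L)) if and only if there exists a largest internal topology on L. -/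
/-- An internal topology on a complete lattice: a neighbourhood whose open
elements satisfy the frame law. -/
def IsITop {L : Type*} [CompleteLattice L] (μ : PreNbhd L) : Prop :=
  μ.IsNbhd ∧ ∀ p ∈ μ.opens, ∀ S ⊆ μ.opens,
    p ⊓ sSup S = sSup ((fun s => p ⊓ s) '' S)


section Aux
variable {L : Type*} [CompleteLattice L]

/-- The principal preneighbourhood. -/
def principalNbhd (L : Type*) [CompleteLattice L] : PreNbhd L where
  nbhd m := Set.Ici m
  top_mem m := le_top
  up_closed m p q hp hpq := le_trans hp hpq
  inf_mem' m p q hp hq := le_inf hp hq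
  antitone m n hmn p hp := le_trans hmn hp
  le_of_mem m p hp := hp

theorem principalNbhd_isNbhd : (principalNbhd L).IsNbhd := by
  constructor
  · intro m p hp
    refine Set.mem_iUnion₂.2 ⟨p, hp, Set.mem_iInter₂.2 fun x hx => hx⟩
  · intro G
    ext p
    simp [principalNbhd, Set.mem_Ici, sSup_le_iff]

theorem le_principalNbhd (ρ : PreNbhd L) : ρ ≤ principalNbhd L :=
  fun m p hp => ρ.le_of_mem hp

/-- IsITop is inherited downward. -/
theorem isITop_of_le {σ μ : PreNbhd L} (hσ : σ.IsNbhd) (hle : σ ≤ μ)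
    (hμ : IsITop μ) : IsITop σ :=
  ⟨hσ, fun p hp S hS => hμ.2 p (hle p hp) S fun s hs => hle s (hS hs)⟩

theorem sSup_mem3 {a : L} {S : Set L} (hS : S ⊆ ({⊥, a, ⊤} : Set L)) :
    sSup S ∈ ({⊥, a, ⊤} : Set L) := by
  by_cases ht : ⊤ ∈ S
  · right; right
    exact le_antisymm le_top (le_sSup ht)
  by_cases ha : a ∈ S
  · right; left
    refine le_antisymm (sSup_le fun s hs => ?_) (le_sSup ha)
    rcases hS hs with rfl | rfl | rfl
    · exact bot_le
    · exact le_rfl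
    · exact absurd hs ht
  · left
    refine le_antisymm (sSup_le fun s hs => ?_) bot_le
    rcases hS hs with rfl | rfl | rfl
    · exact le_rfl
    · exact absurd hs ha
    · exact absurd hs ht

theorem inf_mem3 {a u v : L} (hu : u ∈ ({⊥, a, ⊤} : Set L))
    (hv : v ∈ ({⊥, a, ⊤} : Set L)) : u ⊓ v ∈ ({⊥, a, ⊤} : Set L) := by
  rcases hu with rfl | rfl | rfl <;> rcases hv with rfl | rfl | rfl <;>
    simp [Set.mem_insert_iff]

theorem frame3 {a : L} : ∀ p ∈ ({⊥, a, ⊤} : Set L), ∀ S ⊆ ({⊥, a, ⊤} : Set L),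
    p ⊓ sSup S = sSup ((fun s => p ⊓ s) '' S) := by
  have key : ∀ (p : L) (S : Set L), p = ⊥ ∨ p = a ∨ p = ⊤ → S ⊆ ({⊥, a, ⊤} : Set L) →
      p ⊓ sSup S = sSup ((fun s => p ⊓ s) '' S) := by
    intro p S hp hS
    rcases hp with hp | hp | hp
    · subst hp
      rw [bot_inf_eq]
      refine le_antisymm bot_le (sSup_le ?_)
      rintro x ⟨s, hs, rfl⟩
      exact inf_le_left
    · subst hp
      by_cases ht : (⊤ : L) ∈ S
      · have h1 : p ⊓ sSup S = p := inf_eq_left.mpr (le_sSup_of_le ht le_top)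
        rw [h1]
        refine le_antisymm (le_sSup_of_le ⟨⊤, ht, rfl⟩ (le_of_eq (inf_top_eq p).symm)) (sSup_le ?_)
        rintro x ⟨s, hs, rfl⟩
        exact inf_le_left
      · have hle : ∀ s ∈ S, s ≤ p := by
          intro s hs
          rcases hS hs with h | h | h
          · exact h.le.trans bot_le
          · exact h.le
          · exact absurd (h ▸ hs) ht
        rw [inf_eq_right.mpr (sSup_le hle)]
        refine le_antisymm (sSup_le fun s hs => le_sSup ⟨s, hs, inf_eq_right.mpr (hle s hs)⟩) (sSup_le ?_)
        rintro x ⟨s, hs, rfl⟩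
        exact le_trans inf_le_right (le_sSup hs)
    · subst hp
      rw [top_inf_eq]
      refine le_antisymm (sSup_le fun s hs => le_sSup ⟨s, hs, top_inf_eq s⟩) (sSup_le ?_)
      rintro x ⟨s, hs, rfl⟩
      exact le_trans inf_le_right (le_sSup hs)
  intro p hp S hS
  exact key p S (by simpa using hp) hS

/-- The preneighbourhood generated by the three-element chain `{⊥, a, ⊤}`. -/
def chainNbhd (a : L) : PreNbhd L where
  nbhd m := {p | ∃ u ∈ ({⊥, a, ⊤} : Set L), m ≤ u ∧ u ≤ p}
  top_mem m := ⟨⊤, by simp, le_top, le_rfl⟩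
  up_closed m p q := by
    rintro ⟨u, hu, hmu, hup⟩ hpq
    exact ⟨u, hu, hmu, hup.trans hpq⟩
  inf_mem' m p q := by
    rintro ⟨u, hu, hmu, hup⟩ ⟨v, hv, hmv, hvq⟩
    exact ⟨u ⊓ v, inf_mem3 hu hv, le_inf hmu hmv, inf_le_inf hup hvq⟩
  antitone m n hmn p := by
    rintro ⟨u, hu, hnu, hup⟩
    exact ⟨u, hu, hmn.trans hnu, hup⟩
  le_of_mem m p := by
    rintro ⟨u, hu, hmu, hup⟩
    exact hmu.trans hup

theorem chainNbhd_isNbhd (a : L) : (chainNbhd a).IsNbhd := by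
  constructor
  · rintro m p ⟨u, hu, hmu, hup⟩
    refine Set.mem_iUnion₂.2 ⟨u, ⟨u, hu, hmu, le_rfl⟩, Set.mem_iInter₂.2 fun x hx => ?_⟩
    exact ⟨u, hu, hx, hup⟩
  · intro G
    refine Set.Subset.antisymm ?_ ?_
    · intro p hp
      exact Set.mem_iInter₂.2 fun x hx => (chainNbhd a).antitone (le_sSup hx) hp
    · intro p hp
      have hp' := Set.mem_iInter₂.1 hp
      refine ⟨sSup {w | w ∈ ({⊥, a, ⊤} : Set L) ∧ w ≤ p}, sSup_mem3 (fun w hw => hw.1), sSup_le ?_, sSup_le fun w hw => hw.2⟩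
      intro x hx
      obtain ⟨u, hu, hxu, hup⟩ := hp' x hx
      exact hxu.trans (le_sSup ⟨hu, hup⟩)

theorem chainNbhd_opens (a : L) : (chainNbhd a).opens = ({⊥, a, ⊤} : Set L) := by
  ext p
  constructor
  · rintro ⟨u, hu, hpu, hup⟩
    rwa [le_antisymm hpu hup]
  · intro hp
    exact ⟨p, hp, le_rfl, le_rfl⟩

theorem chainNbhd_isITop (a : L) : IsITop (chainNbhd a) := by
  refine ⟨chainNbhd_isNbhd a, ?_⟩
  rw [chainNbhd_opens]
  exact frame3

end Aux

/-- The internal topologies on `L` form a complete sublattice of the complete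
lattice of neighbourhoods on `L` (i.e. they are closed under the suprema and
infima of arbitrary subsets computed among neighbourhoods) if and only if there
exists a largest internal topology on `L`. -/
theorem itop_complete_sublattice_iff_largest {L : Type*} [CompleteLattice L] :
    ((∀ T : Set (PreNbhd L), (∀ τ ∈ T, IsITop τ) →
        (∀ σ : PreNbhd L, σ.IsNbhd →
          ((∀ τ ∈ T, τ ≤ σ) ∧
            ∀ ρ : PreNbhd L, ρ.IsNbhd → (∀ τ ∈ T, τ ≤ ρ) → σ ≤ ρ) →
          IsITop σ) ∧
        (∀ γ : PreNbhd L, γ.IsNbhd →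
          ((∀ τ ∈ T, γ ≤ τ) ∧
            ∀ ρ : PreNbhd L, ρ.IsNbhd → (∀ τ ∈ T, ρ ≤ τ) → ρ ≤ γ) →
          IsITop γ)) ↔
      ∃ μ : PreNbhd L, IsITop μ ∧ ∀ ν : PreNbhd L, IsITop ν → ν ≤ μ) := by
  constructor
  · intro h
    refine ⟨principalNbhd L, ?_, fun ν hν => le_principalNbhd ν⟩
    refine (h ∅ (by simp)).2 (principalNbhd L) principalNbhd_isNbhd
      ⟨by simp, fun ρ hρ _ => le_principalNbhd ρ⟩
  · rintro ⟨μ, hμ, hmax⟩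
    intro T hT
    have hopen : ∀ a : L, a ∈ μ.nbhd a := by
      intro a
      have := hmax (chainNbhd a) (chainNbhd_isITop a)
      exact this a ⟨a, by simp, le_rfl, le_rfl⟩
    have hPitop : IsITop (principalNbhd L) :=
      ⟨principalNbhd_isNbhd, fun p _ S _ => hμ.2 p (hopen p) S fun s _ => hopen s⟩
    constructor
    · rintro σ hσ ⟨hub, hlub⟩
      have hσμ : σ ≤ μ := hlub μ hμ.1 fun τ hτ => hmax τ (hT τ hτ)
      exact isITop_of_le hσ hσμ hμ
    · rintro γ hγ ⟨hlb, hglb⟩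
      by_cases hne : T.Nonempty
      · obtain ⟨τ, hτ⟩ := hne
        exact isITop_of_le hγ (hlb τ hτ) (hT τ hτ)
      · have hγtop : γ = principalNbhd L := by
          have h1 : principalNbhd L ≤ γ :=
            hglb (principalNbhd L) principalNbhd_isNbhd fun τ hτ =>
              absurd ⟨τ, hτ⟩ hne
          exact le_antisymm (le_principalNbhd γ) h1
        rw [hγtop]
        exact hPitop
end

section
/- Let L and M be complete lattices, img : L → M and inv : M → L monotone maps forming a Galois connection img ⊣ inv, and let φ be a weak neighbourhood on M. Then the map ψ : L → Fil(L) defined by ψ(m) = invfil(φ(img m)) is a weak neighbourhood on L. Consequently, if μ is any preneighbourhood on L with ψ(m) ⊆ μ(m) for all m ∈ L, then also ψ(m) ⊆ μ̄(m) for all m, where μ̄ denotes the largest weak neighbourhood on L that is pointwise below μ. -/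
/-- The inverse filter (as a set): `invfilS inv B = {x : ∃ b ∈ B, inv b ≤ x}`. -/
def invfilS {L M : Type*} [CompleteLattice L] [CompleteLattice M]
    (inv : M → L) (B : Set M) : Set L := {x | ∃ b ∈ B, inv b ≤ x}

/-- Along a Galois connection `img ⊣ inv`, pulling back a weak neighbourhood
`φ` on `M` by `m ↦ invfil(φ(img m))` gives a weak neighbourhood `ψ` on `L`;
consequently if `ψ` is below a preneighbourhood `μ` then it is below the
largest weak neighbourhood `μ̄` below `μ`. -/
theorem invfil_img_weakNbhd {L M : Type*} [CompleteLattice L]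
    [CompleteLattice M] {img : L → M} {inv : M → L}
    (gc : GaloisConnection img inv) (φ : PreNbhd M) (hφ : φ.IsWeak) :
    ∃ ψ : PreNbhd L,
      (∀ m : L, ψ.nbhd m = invfilS inv (φ.nbhd (img m))) ∧
      ψ.IsWeak ∧
      ∀ μ μbar : PreNbhd L, μbar.IsWeak → μbar ≤ μ →
        (∀ ν : PreNbhd L, ν.IsWeak → ν ≤ μ → ν ≤ μbar) →
        ψ ≤ μ → ψ ≤ μbar := by
  refine ⟨⟨fun m => invfilS inv (φ.nbhd (img m)), ?_, ?_, ?_, ?_, ?_⟩, fun _ => rfl, ?_, ?_⟩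
  · exact fun m => ⟨⊤, φ.top_mem _, le_top⟩
  · rintro m p q ⟨b, hb, hbp⟩ hpq
    exact ⟨b, hb, hbp.trans hpq⟩
  · rintro m p q ⟨b, hb, hbp⟩ ⟨c, hc, hcq⟩
    exact ⟨b ⊓ c, φ.inf_mem' _ hb hc,
      le_inf ((gc.monotone_u inf_le_left).trans hbp)
        ((gc.monotone_u inf_le_right).trans hcq)⟩
  · rintro m n hmn x ⟨b, hb, hbx⟩
    exact ⟨b, φ.antitone (gc.monotone_l hmn) hb, hbx⟩
  · rintro m p ⟨b, hb, hbp⟩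
    exact ((gc _ _).mp (φ.le_of_mem hb)).trans hbp
  · rintro m x ⟨b, hb, hbx⟩
    obtain ⟨_, ⟨q, rfl⟩, _, ⟨hq, rfl⟩, hx⟩ := hφ (img m) hb
    refine Set.mem_iUnion₂.mpr ⟨inv q, ⟨q, hq, le_rfl⟩, ?_⟩
    refine Set.mem_iInter₂.mpr fun z hz => ?_
    have : b ∈ φ.nbhd (img z) := Set.mem_iInter₂.mp hx (img z) ((gc _ _).mpr hz)
    exact ⟨b, this, hbx⟩
  · intro μ μbar _ _ hmax hψμ
    exact hmax _ (by
      rintro m x ⟨b, hb, hbx⟩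
      obtain ⟨_, ⟨q, rfl⟩, _, ⟨hq, rfl⟩, hx⟩ := hφ (img m) hb
      refine Set.mem_iUnion₂.mpr ⟨inv q, ⟨q, hq, le_rfl⟩, ?_⟩
      refine Set.mem_iInter₂.mpr fun z hz => ?_
      exact ⟨b, Set.mem_iInter₂.mp hx (img z) ((gc _ _).mpr hz), hbx⟩) hψμ
end

section
/- Let L and M be complete lattices, img : L → M and inv : M → L monotone maps forming a Galois connection img ⊣ inv, and suppose additionally that inv preserves arbitrary suprema. If φ is a neighbourhood on M, then the map ψ : L → Fil(L) defined by ψ(m) = invfil(φ(img m)) is a neighbourhood on L. -/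
/-- Along a Galois connection `img ⊣ inv` whose right adjoint `inv` preserves
arbitrary suprema, pulling back a neighbourhood `φ` on `M` by
`m ↦ invfil(φ(img m))` gives a neighbourhood on `L`. -/
theorem invfil_img_nbhd {L M : Type*} [CompleteLattice L]
    [CompleteLattice M] {img : L → M} {inv : M → L}
    (gc : GaloisConnection img inv)
    (hsup : ∀ S : Set M, inv (sSup S) = sSup (inv '' S))
    (φ : PreNbhd M) (hφ : φ.IsNbhd) :
    ∃ ψ : PreNbhd L,
      (∀ m : L, ψ.nbhd m = invfilS inv (φ.nbhd (img m))) ∧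
      ψ.IsNbhd := by
  classical
  refine ⟨{ nbhd := fun m => invfilS inv (φ.nbhd (img m))
            top_mem := fun m => ⟨⊤, φ.top_mem _, le_top⟩
            up_closed := by
              rintro m p q ⟨b, hb, hle⟩ hpq; exact ⟨b, hb, hle.trans hpq⟩
            inf_mem' := by
              rintro m p q ⟨b, hb, hbp⟩ ⟨c, hc, hcq⟩
              exact ⟨b ⊓ c, φ.inf_mem' _ hb hc,
                le_inf ((gc.monotone_u inf_le_left).trans hbp)
                  ((gc.monotone_u inf_le_right).trans hcq)⟩
            antitone := by
              rintro m n hmn p ⟨b, hb, hle⟩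
              exact ⟨b, φ.antitone (gc.monotone_l hmn) hb, hle⟩
            le_of_mem := by
              rintro m p ⟨b, hb, hle⟩
              exact (gc.le_u_l m).trans ((gc.monotone_u (φ.le_of_mem hb)).trans hle) },
          fun m => rfl, ?_, ?_⟩
  · -- weakness
    rintro m q ⟨b, hb, hbq⟩
    obtain ⟨c, hc, hbc⟩ := Set.mem_iUnion₂.1 (hφ.1 (img m) hb)
    refine Set.mem_iUnion₂.2 ⟨inv c, ⟨c, hc, le_rfl⟩, ?_⟩
    refine Set.mem_iInter₂.2 fun x hx => ?_
    exact ⟨b, Set.mem_iInter₂.1 hbc (img x) (gc.l_le hx), hbq⟩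
  · -- suprema
    intro G
    ext p
    constructor
    · rintro ⟨b, hb, hbp⟩
      refine Set.mem_iInter₂.2 fun x hx => ⟨b, ?_, hbp⟩
      exact φ.antitone (gc.monotone_l (le_sSup hx)) hb
    · intro hp
      have hp' := Set.mem_iInter₂.1 hp
      choose b hb hbp using hp'
      refine ⟨sSup {y | ∃ x, ∃ hx : x ∈ G, y = b x hx}, ?_, ?_⟩
      · have himg : img (sSup G) = sSup (img '' G) := by
          rw [gc.l_sSup, sSup_image]
        rw [himg, hφ.2]
        refine Set.mem_iInter₂.2 fun y hy => ?_
        obtain ⟨x, hx, rfl⟩ := hy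
        exact φ.up_closed _ (hb x hx) (le_sSup ⟨x, hx, rfl⟩)
      · rw [hsup, sSup_le_iff]
        rintro z ⟨y, ⟨x, hx, rfl⟩, rfl⟩
        exact hbp x hx
end

section
/- Let L be a complete lattice, p ∈ L, and γ a preneighbourhood on L. For m in the complete lattice Iic p = {x ∈ L : x ≤ p}, define γ_p(m) = {u ∈ Iic p : there exists w ∈ γ(m) with p ⊓ w ≤ u}. Then: (a) if γ is a weak neighbourhood on L, then γ_p is a weak neighbourhood on Iic p; (b) if γ is a neighbourhood on L and the map x ↦ p ⊓ x preserves arbitrary suprema (p ⊓ sSup S = sSup {p ⊓ s : s ∈ S} for every S ⊆ L), then γ_p is a neighbourhood on Iic p. -/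
/-- The induced preneighbourhood on `Iic p`. -/
def inducedPN {L : Type*} [CompleteLattice L] (γ : PreNbhd L) (p : L) :
    PreNbhd (Set.Iic p) where
  nbhd m := {u | ∃ w ∈ γ.nbhd (m : L), p ⊓ w ≤ (u : L)}
  top_mem m := ⟨⊤, γ.top_mem _, by simp⟩
  up_closed m u v := by
    rintro ⟨w, hw, hle⟩ huv
    exact ⟨w, hw, hle.trans huv⟩
  inf_mem' m u v := by
    rintro ⟨w, hw, hle⟩ ⟨w', hw', hle'⟩
    refine ⟨w ⊓ w', γ.inf_mem' _ hw hw', ?_⟩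
    simp only [Set.Iic.coe_inf]
    exact le_inf ((inf_le_inf_left p inf_le_left).trans hle)
      ((inf_le_inf_left p inf_le_right).trans hle')
  antitone m n hmn := by
    rintro u ⟨w, hw, hle⟩
    exact ⟨w, γ.antitone hmn hw, hle⟩
  le_of_mem m u := by
    rintro ⟨w, hw, hle⟩
    exact Subtype.coe_le_coe.1 (le_trans (le_inf m.2 (γ.le_of_mem hw)) hle)

theorem inducedPN_mem_iff {L : Type*} [CompleteLattice L] (γ : PreNbhd L) (p : L)
    (m u : Set.Iic p) :
    u ∈ (inducedPN γ p).nbhd m ↔ ∃ w ∈ γ.nbhd (m : L), p ⊓ w ≤ (u : L) := Iff.rfl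

theorem inducedPN_isWeak {L : Type*} [CompleteLattice L] (γ : PreNbhd L) (p : L)
    (h : γ.IsWeak) : (inducedPN γ p).IsWeak := by
  intro m u hu
  obtain ⟨w, hw, hle⟩ := hu
  have := h (m : L) hw
  simp only [Set.mem_iUnion] at this
  obtain ⟨q, hq, hqmem⟩ := this
  simp only [Set.mem_iInter] at hqmem
  refine Set.mem_iUnion.2 ⟨⟨p ⊓ q, inf_le_left⟩, Set.mem_iUnion.2 ⟨⟨q, hq, le_refl _⟩, ?_⟩⟩
  refine Set.mem_iInter.2 fun x => Set.mem_iInter.2 fun hx => ?_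
  exact ⟨w, hqmem (x : L) (le_trans hx inf_le_right), hle⟩

/-- For `p : L` and a preneighbourhood `γ` on `L`, the induced assignment on the
complete lattice `Iic p`, `γ_p(m) = {u ≤ p : ∃ w ∈ γ(m), p ⊓ w ≤ u}`, is a weak
neighbourhood on `Iic p` whenever `γ` is a weak neighbourhood, and a
neighbourhood on `Iic p` whenever `γ` is a neighbourhood and `x ↦ p ⊓ x`
preserves arbitrary suprema. -/
theorem induced_nbhd_on_Iic {L : Type*} [CompleteLattice L]
    (γ : PreNbhd L) (p : L) :
    (γ.IsWeak → ∃ γp : PreNbhd (Set.Iic p),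
      (∀ m u : Set.Iic p,
        u ∈ γp.nbhd m ↔ ∃ w ∈ γ.nbhd (m : L), p ⊓ w ≤ (u : L)) ∧
      γp.IsWeak) ∧
    (γ.IsNbhd → (∀ S : Set L, p ⊓ sSup S = sSup ((fun s => p ⊓ s) '' S)) →
      ∃ γp : PreNbhd (Set.Iic p),
        (∀ m u : Set.Iic p,
          u ∈ γp.nbhd m ↔ ∃ w ∈ γ.nbhd (m : L), p ⊓ w ≤ (u : L)) ∧
        γp.IsNbhd) := by
  constructor
  · intro hw
    exact ⟨inducedPN γ p, inducedPN_mem_iff γ p, inducedPN_isWeak γ p hw⟩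
  · rintro ⟨hw, hsup⟩ hpres
    refine ⟨inducedPN γ p, inducedPN_mem_iff γ p, inducedPN_isWeak γ p hw, fun G => ?_⟩
    have hcoe : ((sSup G : Set.Iic p) : L) = sSup ((↑) '' G) := rfl
    apply subset_antisymm
    · rintro u ⟨w, hw', hle⟩
      refine Set.mem_iInter.2 fun x => Set.mem_iInter.2 fun hx => ?_
      refine ⟨w, ?_, hle⟩
      have : w ∈ ⋂ y ∈ ((↑) '' G : Set L), γ.nbhd y := by
        rw [← hsup]; rw [hcoe] at hw'; exact hw'
      simp only [Set.mem_iInter] at this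
      exact this (x : L) ⟨x, hx, rfl⟩
    · intro u hu
      simp only [Set.mem_iInter] at hu
      classical
      choose w hwmem hwle using fun x hx => hu x hx
      set W : Set L := {v | ∃ x : Set.Iic p, ∃ hx : x ∈ G, v = w x hx} with hW
      refine ⟨sSup W, ?_, ?_⟩
      · rw [hcoe, hsup]
        refine Set.mem_iInter.2 fun y => Set.mem_iInter.2 fun hy => ?_
        obtain ⟨x, hx, rfl⟩ := hy
        exact γ.up_closed _ (hwmem x hx) (le_sSup ⟨x, hx, rfl⟩)
      · rw [hpres]
        refine sSup_le ?_
        rintro v ⟨s, ⟨x, hx, rfl⟩, rfl⟩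
        exact hwle x hx
end
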